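/- Let P := {(x,y,z) ∈ ℝ³ : |x| + |y| + |z| ≤ 1} and, for each even integer p ≥ 2, let P^p := {(x,y,z) ∈ ℝ³ : |x - t_p| + |y| + |z| ≤ l_p/2}. Then the Hausdorff distance h(P, P^{2n}) tends to 0 as n → ∞. -/

import Mathlib

/-!
The cross-polytope `P^p` is the image of `P` under the homothety `x ↦ (t_p, 0, 0) + (l_p / 2) x`,
and since `P` lies in the Euclidean unit ball, such a homothety moves each point of `P` by at most
`|t_p| + |l_p / 2 - 1|`, which bounds `h(P, P^p)`. Writing `p^{p/(p-1)} = p · p^{1/(p-1)}` and using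
`(c p)^{1/(p-1)} → 1`, one finds `t_p → 0` and `l_p → 2`.
-/

open Filter Topology Metric Set

theorem Metric.hausdorffDist_image_le_of_forall_dist_le {α : Type*} [PseudoMetricSpace α]
    {s : Set α} {f : α → α} {C : ℝ} (hC : 0 ≤ C) (h : ∀ x ∈ s, dist x (f x) ≤ C) :
    hausdorffDist s (f '' s) ≤ C := by
  refine hausdorffDist_le_of_mem_dist hC (fun x hx => ⟨f x, mem_image_of_mem f hx, h x hx⟩) ?_
  rintro _ ⟨x, hx, rfl⟩
  exact ⟨x, hx, dist_comm x (f x) ▸ h x hx⟩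

theorem hausdorffDist_homothety_le {E : Type*} [SeminormedAddCommGroup E] [NormedSpace ℝ E]
    {s : Set E} (hs : s ⊆ closedBall 0 1) (c : E) (r : ℝ) :
    hausdorffDist s ((fun x => c + r • x) '' s) ≤ ‖c‖ + |r - 1| := by
  refine hausdorffDist_image_le_of_forall_dist_le (by positivity) fun x hx => ?_
  have hx : ‖x‖ ≤ 1 := by simpa using hs hx
  calc dist x (c + r • x) = ‖c + (r - 1) • x‖ := by
        rw [dist_comm, dist_eq_norm, sub_smul, one_smul]; abel_nf
    _ ≤ ‖c‖ + |r - 1| * ‖x‖ := by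
        grw [norm_add_le, norm_smul, Real.norm_eq_abs]
    _ ≤ ‖c‖ + |r - 1| := by
        grw [hx, mul_one]

section l1Ball

variable {ι : Type*} [Fintype ι]

def l1Ball (c : EuclideanSpace ℝ ι) (r : ℝ) : Set (EuclideanSpace ℝ ι) :=
  {v | ∑ i, |v i - c i| ≤ r}

theorem EuclideanSpace.norm_le_sum_abs (v : EuclideanSpace ℝ ι) : ‖v‖ ≤ ∑ i, |v i| := by
  rw [EuclideanSpace.norm_eq]
  refine Real.sqrt_le_iff.mpr ⟨by positivity, ?_⟩
  simpa using Finset.sum_sq_le_sq_sum_of_nonneg (s := Finset.univ) (f := fun i => |v i|)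
    fun i _ => abs_nonneg _

theorem l1Ball_zero_one_subset_closedBall : l1Ball (0 : EuclideanSpace ℝ ι) 1 ⊆ closedBall 0 1 :=
  fun v hv => mem_closedBall_zero_iff.mpr <|
    (EuclideanSpace.norm_le_sum_abs v).trans (by simpa [l1Ball] using hv)

theorem l1Ball_eq_image (c : EuclideanSpace ℝ ι) {r : ℝ} (hr : 0 < r) :
    l1Ball c r = (fun x => c + r • x) '' l1Ball 0 1 := by
  ext v
  simp only [l1Ball, mem_ofPred_eq, mem_image]
  constructor
  · intro hv
    refine ⟨r⁻¹ • (v - c), ?_, ?_⟩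
    · simp only [PiLp.smul_apply, PiLp.sub_apply, smul_eq_mul, PiLp.zero_apply, sub_zero, abs_mul,
        abs_inv, abs_of_pos hr, ← Finset.mul_sum]
      rwa [inv_mul_le_iff₀ hr, mul_one]
    · rw [smul_smul, mul_inv_cancel₀ hr.ne', one_smul, add_sub_cancel]
  · rintro ⟨x, hx, rfl⟩
    simp only [PiLp.add_apply, PiLp.smul_apply, smul_eq_mul, add_sub_cancel_left, abs_mul,
      abs_of_pos hr, ← Finset.mul_sum]
    exact mul_le_of_le_one_right hr.le (by simpa using hx)

theorem hausdorffDist_l1Ball_le (c : EuclideanSpace ℝ ι) {r : ℝ} (hr : 0 < r) :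
    hausdorffDist (l1Ball 0 1) (l1Ball c r) ≤ ‖c‖ + |r - 1| := by
  rw [l1Ball_eq_image c hr]
  exact hausdorffDist_homothety_le (E := EuclideanSpace ℝ ι) l1Ball_zero_one_subset_closedBall c r

end l1Ball

theorem l1Ball_single_fin_three (t r : ℝ) :
    l1Ball (EuclideanSpace.single 0 t) r =
      {v : EuclideanSpace ℝ (Fin 3) | |v 0 - t| + |v 1| + |v 2| ≤ r} := by
  ext v
  simp only [l1Ball, Fin.sum_univ_three, PiLp.single_apply]
  simp

theorem tendsto_one_div_sub_one_atTop : Tendsto (fun q : ℝ => 1 / (q - 1)) atTop (𝓝 0) :=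
  tendsto_const_nhds.div_atTop (tendsto_atTop_add_const_right _ (-1) tendsto_id)

theorem tendsto_mul_rpow_one_div_sub_one {c : ℝ} (hc : 0 < c) :
    Tendsto (fun q : ℝ => (c * q) ^ (1 / (q - 1))) atTop (𝓝 1) := by
  have hconst : Tendsto (fun q : ℝ => c ^ (1 / (q - 1))) atTop (𝓝 1) := by
    simpa [Function.comp_def] using
      (Real.continuousAt_const_rpow hc.ne').tendsto.comp tendsto_one_div_sub_one_atTop
  have hvar : Tendsto (fun q : ℝ => q ^ (1 / (q - 1))) atTop (𝓝 1) := by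
    simpa [sub_eq_add_neg] using tendsto_rpow_div_mul_add 1 1 (-1) one_ne_zero.symm
  refine (one_mul (1 : ℝ) ▸ hconst.mul hvar).congr' ?_
  filter_upwards [eventually_ge_atTop 0] with q hq
  rw [Real.mul_rpow hc.le hq]

theorem Real.rpow_div_sub_one {p : ℝ} (hp : 1 < p) :
    p ^ (p / (p - 1)) = p * p ^ (1 / (p - 1)) := by
  have hp' : p - 1 ≠ 0 := sub_ne_zero.mpr hp.ne'
  have : p / (p - 1) = 1 + 1 / (p - 1) := by field_simp; ring
  rw [this, Real.rpow_add (by linarith), Real.rpow_one]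

noncomputable def tParam (p : ℝ) : ℝ :=
  (-p * ((2 * p) ^ (1 / (p - 1)) - 1) - 1) / (2 * p ^ (p / (p - 1)))

noncomputable def lParam (p : ℝ) : ℝ :=
  (p * ((2 * p) ^ (1 / (p - 1)) + 1) - 1) / p ^ (p / (p - 1))

theorem tendsto_tParam : Tendsto tParam atTop (𝓝 0) := by
  have h := ((((tendsto_mul_rpow_one_div_sub_one two_pos).sub_const 1).add
    tendsto_inv_atTop_zero).div
    ((tendsto_mul_rpow_one_div_sub_one one_pos).const_mul 2) (by norm_num)).neg
  rw [show -((1 - 1 + 0) / (2 * 1) : ℝ) = 0 by norm_num] at h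
  refine h.congr' ?_
  filter_upwards [eventually_gt_atTop 1] with p hp
  have := Real.rpow_pos_of_pos (zero_lt_one.trans hp) (1 / (p - 1))
  rw [tParam, Real.rpow_div_sub_one hp]
  simp only [Pi.div_apply, one_mul]
  field_simp
  ring

theorem tendsto_lParam : Tendsto lParam atTop (𝓝 2) := by
  have h := (((tendsto_mul_rpow_one_div_sub_one two_pos).add_const 1).sub
    tendsto_inv_atTop_zero).div
    (tendsto_mul_rpow_one_div_sub_one one_pos) one_ne_zero
  rw [show ((1 + 1 - 0) / 1 : ℝ) = 2 by norm_num] at h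
  refine h.congr' ?_
  filter_upwards [eventually_gt_atTop 1] with p hp
  have := Real.rpow_pos_of_pos (zero_lt_one.trans hp) (1 / (p - 1))
  rw [lParam, Real.rpow_div_sub_one hp]
  simp only [Pi.div_apply, one_mul]
  field_simp

theorem stmt_16 :
    Filter.Tendsto
      (fun n : ℕ =>
        Metric.hausdorffDist
          {v : EuclideanSpace ℝ (Fin 3) | |v 0| + |v 1| + |v 2| ≤ 1}
          {v : EuclideanSpace ℝ (Fin 3) |
            |v 0 - (-((2 * n : ℕ) : ℝ) *
                  ((2 * ((2 * n : ℕ) : ℝ)) ^ ((1 : ℝ) / (((2 * n : ℕ) : ℝ) - 1)) - 1) - 1) /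
                (2 * ((2 * n : ℕ) : ℝ) ^ (((2 * n : ℕ) : ℝ) / (((2 * n : ℕ) : ℝ) - 1)))| +
              |v 1| + |v 2| ≤
              (((2 * n : ℕ) : ℝ) *
                    ((2 * ((2 * n : ℕ) : ℝ)) ^ ((1 : ℝ) / (((2 * n : ℕ) : ℝ) - 1)) + 1) - 1) /
                  ((2 * n : ℕ) : ℝ) ^ (((2 * n : ℕ) : ℝ) / (((2 * n : ℕ) : ℝ) - 1)) / 2})
      Filter.atTop (nhds 0) := by
  have hp : Tendsto (fun n : ℕ => ((2 * n : ℕ) : ℝ)) atTop atTop :=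
    tendsto_natCast_atTop_atTop.comp (tendsto_id.const_mul_atTop' two_pos)
  have hshift : Tendsto (fun n : ℕ => tParam (2 * n : ℕ)) atTop (𝓝 0) :=
    tendsto_tParam.comp hp
  have hradius : Tendsto (fun n : ℕ => lParam (2 * n : ℕ) / 2) atTop (𝓝 1) := by
    simpa using (tendsto_lParam.comp hp).div_const 2
  have hbound : Tendsto (fun n : ℕ => |tParam (2 * n : ℕ)| + |lParam (2 * n : ℕ) / 2 - 1|)
      atTop (𝓝 0) := by
    simpa using hshift.abs.add (hradius.sub_const 1).abs
  have hP : {v : EuclideanSpace ℝ (Fin 3) | |v 0| + |v 1| + |v 2| ≤ 1} = l1Ball 0 1 := by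
    rw [← (PiLp.single_eq_zero_iff 2 (0 : Fin 3)).mpr rfl, l1Ball_single_fin_three]
    simp only [sub_zero]
  refine squeeze_zero' (.of_forall fun _ => hausdorffDist_nonneg) ?_ hbound
  filter_upwards [hradius.eventually (eventually_gt_nhds one_pos)] with n hn
  have := hausdorffDist_l1Ball_le (EuclideanSpace.single (0 : Fin 3) (tParam (2 * n : ℕ))) hn
  rw [l1Ball_single_fin_three, PiLp.norm_single, Real.norm_eq_abs] at this
  rwa [hP]
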